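/- Let n ≥ 1, μ ∈ ℝ, and c, γ ∈ ℝⁿ with |c|² = 1 − μ², ⟨c,γ⟩ = 0, and |γ|² = (1−μ)/2. Define F : ℝ² → ℝ^{n+1} by F(x,y) = (x² + μy², c¹y² + 2γ¹xy, …, cⁿy² + 2γⁿxy). Then for all (x,y) ∈ ℝ²: (i) |DF(x,y)|² = 2(3−μ)(x²+y²); and (ii) the Euclidean Laplacian ΔF is the constant vector (2+2μ, 2c¹, …, 2cⁿ), so |ΔF|² = 8(1+μ). Consequently, the two conditions |DF(x,y)|² = 6(x²+y²) for all (x,y) and |ΔF|² = 8 hold if and only if μ = 0. -/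

import Mathlib

/-!
Every component of `F` is a binary quadratic form `a x² + b x y + d y²`, whose gradient is
`(2 a x + b y, b x + 2 d y)` and whose Laplacian is the constant `2 (a + d)`. For `F` the
coefficients are `(1, 0, μ)` and `(0, 2 γʲ, cʲ)`, so `ΔF = (2 + 2μ, 2c)` and, after summing, the
three constraints on `c` and `γ` turn `|DF|²` and `|ΔF|²` into `2 (3 - μ) (x² + y²)` and
`8 (1 + μ)`. At `(x, y) = (1, 0)` the first equals `6` only for `μ = 0`.
-/

/-- The componentwise Euclidean Laplacian of a map `ℝ² → ℝᵐ`,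
`Δf = ∂²f/∂x² + ∂²f/∂y²`. -/
noncomputable def lap2 {m : ℕ} (f : ℝ → ℝ → Fin m → ℝ) (x y : ℝ) : Fin m → ℝ :=
  fun i => iteratedDeriv 2 (fun x' => f x' y i) x + iteratedDeriv 2 (fun y' => f x y' i) y

/-- Squared Frobenius norm of the total derivative of a map `ℝ² → ℝᵐ`:
the sum of the squares of all first partial derivatives of all components. -/
noncomputable def frob2 {m : ℕ} (f : ℝ → ℝ → Fin m → ℝ) (x y : ℝ) : ℝ :=
  ∑ i, ((deriv (fun x' => f x' y i) x) ^ 2 + (deriv (fun y' => f x y' i) y) ^ 2)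

section Quadratic

variable (a b c : ℝ)

theorem hasDerivAt_quadratic (t : ℝ) :
    HasDerivAt (fun s : ℝ => a * s ^ 2 + b * s + c) (2 * a * t + b) t :=
  ((((hasDerivAt_pow 2 t).const_mul a).fun_add ((hasDerivAt_id' t).const_mul b)).add_const
    c).congr_deriv (by push_cast; ring)

theorem deriv_quadratic : deriv (fun s : ℝ => a * s ^ 2 + b * s + c) = fun t => 2 * a * t + b :=
  funext fun t => (hasDerivAt_quadratic a b c t).deriv

theorem iteratedDeriv_two_quadratic (t : ℝ) :
    iteratedDeriv 2 (fun s : ℝ => a * s ^ 2 + b * s + c) t = 2 * a := by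
  rw [iteratedDeriv_succ, iteratedDeriv_one, deriv_quadratic]
  simp

end Quadratic

def quadMap {m : ℕ} (A B D : Fin m → ℝ) (x y : ℝ) : Fin m → ℝ :=
  fun i => A i * x ^ 2 + B i * x * y + D i * y ^ 2

section QuadMap

variable {m : ℕ} (A B D : Fin m → ℝ) (x y : ℝ)

theorem quadMap_eq_quadratic_fst (i : Fin m) :
    (fun x' => quadMap A B D x' y i) = fun s => A i * s ^ 2 + B i * y * s + D i * y ^ 2 := by
  ext s; simp only [quadMap]; ring

theorem quadMap_eq_quadratic_snd (i : Fin m) :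
    (fun y' => quadMap A B D x y' i) = fun s => D i * s ^ 2 + B i * x * s + A i * x ^ 2 := by
  ext s; simp only [quadMap]; ring

theorem frob2_quadMap :
    frob2 (quadMap A B D) x y =
      ∑ i, ((2 * A i * x + B i * y) ^ 2 + (B i * x + 2 * D i * y) ^ 2) := by
  refine Finset.sum_congr rfl fun i _ => ?_
  rw [quadMap_eq_quadratic_fst, quadMap_eq_quadratic_snd, deriv_quadratic, deriv_quadratic]
  ring

theorem lap2_quadMap : lap2 (quadMap A B D) x y = fun i => 2 * (A i + D i) := by
  ext i
  rw [lap2, quadMap_eq_quadratic_fst, quadMap_eq_quadratic_snd, iteratedDeriv_two_quadratic,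
    iteratedDeriv_two_quadratic]
  ring

end QuadMap

theorem stmt11_general (n : ℕ) (μ : ℝ) (c γ : Fin n → ℝ)
    (hc : ∑ j, (c j) ^ 2 = 1 - μ ^ 2)
    (hcγ : ∑ j, c j * γ j = 0)
    (hγ : ∑ j, (γ j) ^ 2 = (1 - μ) / 2)
    (F : ℝ → ℝ → Fin (n + 1) → ℝ)
    (hF : ∀ x y, F x y =
      Fin.cons (x ^ 2 + μ * y ^ 2) (fun i => c i * y ^ 2 + 2 * γ i * x * y)) :
    (∀ x y : ℝ, frob2 F x y = 2 * (3 - μ) * (x ^ 2 + y ^ 2)) ∧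
    (∀ x y : ℝ, lap2 F x y = Fin.cons (2 + 2 * μ) (fun i => 2 * c i)) ∧
    (∀ x y : ℝ, ∑ i, (lap2 F x y i) ^ 2 = 8 * (1 + μ)) ∧
    (((∀ x y : ℝ, frob2 F x y = 6 * (x ^ 2 + y ^ 2)) ∧
        (∀ x y : ℝ, ∑ i, (lap2 F x y i) ^ 2 = 8)) ↔ μ = 0) := by
  have hF_quad : F = quadMap (Fin.cons 1 0) (Fin.cons 0 fun j => 2 * γ j) (Fin.cons μ c) := by
    ext x y i
    rw [hF]
    refine Fin.cases ?_ (fun j => ?_) i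
    · simp only [quadMap, Fin.cons_zero]; ring
    · simp only [quadMap, Fin.cons_succ, Pi.zero_apply]; ring
  have hfrob (x y : ℝ) : frob2 F x y = 2 * (3 - μ) * (x ^ 2 + y ^ 2) := by
    have hsum : ∑ j, ((2 * 0 * x + 2 * γ j * y) ^ 2 + (2 * γ j * x + 2 * c j * y) ^ 2) =
        4 * (x ^ 2 + y ^ 2) * ∑ j, γ j ^ 2 + 4 * y ^ 2 * ∑ j, c j ^ 2
          + 8 * x * y * ∑ j, c j * γ j := by
      simp only [Finset.mul_sum, ← Finset.sum_add_distrib]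
      exact Finset.sum_congr rfl fun j _ => by ring
    rw [hF_quad, frob2_quadMap, Fin.sum_univ_succ]
    simp only [Fin.cons_zero, Fin.cons_succ, Pi.zero_apply, hsum, hc, hcγ, hγ]
    ring
  have hlap (x y : ℝ) : lap2 F x y = Fin.cons (2 + 2 * μ) (fun i => 2 * c i) := by
    rw [hF_quad, lap2_quadMap]
    ext i
    refine Fin.cases ?_ (fun j => ?_) i
    · simp only [Fin.cons_zero]; ring
    · simp only [Fin.cons_succ, Pi.zero_apply, zero_add]
  have hlapsq (x y : ℝ) : ∑ i, (lap2 F x y i) ^ 2 = 8 * (1 + μ) := by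
    rw [hlap, Fin.sum_univ_succ]
    simp only [Fin.cons_zero, Fin.cons_succ, mul_pow, ← Finset.mul_sum, hc]
    ring
  refine ⟨hfrob, hlap, hlapsq, ⟨fun ⟨h, _⟩ => ?_, ?_⟩⟩
  · linarith [(hfrob 1 0).symm.trans (h 1 0)]
  · rintro rfl
    exact ⟨fun x y => by rw [hfrob]; ring, fun x y => by rw [hlapsq]; ring⟩

theorem stmt11 (n : ℕ) (hn : 1 ≤ n) (μ : ℝ) (c γ : Fin n → ℝ)
    (hc : ∑ j, (c j) ^ 2 = 1 - μ ^ 2)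
    (hcγ : ∑ j, c j * γ j = 0)
    (hγ : ∑ j, (γ j) ^ 2 = (1 - μ) / 2)
    (F : ℝ → ℝ → Fin (n + 1) → ℝ)
    (hF : ∀ x y, F x y =
      Fin.cons (x ^ 2 + μ * y ^ 2) (fun i => c i * y ^ 2 + 2 * γ i * x * y)) :
    (∀ x y : ℝ, frob2 F x y = 2 * (3 - μ) * (x ^ 2 + y ^ 2)) ∧
    (∀ x y : ℝ, lap2 F x y = Fin.cons (2 + 2 * μ) (fun i => 2 * c i)) ∧
    (∀ x y : ℝ, ∑ i, (lap2 F x y i) ^ 2 = 8 * (1 + μ)) ∧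
    (((∀ x y : ℝ, frob2 F x y = 6 * (x ^ 2 + y ^ 2)) ∧
        (∀ x y : ℝ, ∑ i, (lap2 F x y i) ^ 2 = 8)) ↔ μ = 0) :=
  stmt11_general n μ c γ hc hcγ hγ F hF
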